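/- Let Z⋆ be an n×n symmetric PSD matrix with rank n−1, and let X⋆ be a feasible matrix (X⋆ ⪰ 0, trace X⋆ = 1) with Z⋆ X⋆ = 0; so X⋆ = vv^⊤ where v spans the null space of Z⋆. Then for every feasible X (X ⪰ 0, trace X = 1): ⟨Z⋆, X⟩ ≥ (λ_{n−1}(Z⋆)/2)·‖X − X⋆‖_F². -/

import Mathlib

open Matrix

/-- The `i`-th largest eigenvalue (0-indexed: `i = 0` is the largest) of a
Hermitian (real symmetric) matrix. -/
noncomputable def eigDesc {n : ℕ} {A : Matrix (Fin n) (Fin n) ℝ}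
    (hA : A.IsHermitian) (i : Fin n) : ℝ :=
  hA.eigenvalues (Tuple.sort hA.eigenvalues i.rev)

/-- Frobenius norm of a square real matrix. -/
noncomputable def frob {n : ℕ} (A : Matrix (Fin n) (Fin n) ℝ) : ℝ :=
  Real.sqrt ((Aᵀ * A).trace)

lemma aux_diagEntry_nonneg {n : ℕ} {M : Matrix (Fin n) (Fin n) ℝ} (hM : M.PosSemidef)
    (i : Fin n) : 0 ≤ M i i := by
  exact hM.diag_nonneg

lemma aux_trace_nonneg {n : ℕ} {M : Matrix (Fin n) (Fin n) ℝ} (hM : M.PosSemidef) :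
    0 ≤ M.trace :=
  Finset.sum_nonneg fun i _ => aux_diagEntry_nonneg hM i

lemma aux_trace_mul_nonneg {n : ℕ} {A B : Matrix (Fin n) (Fin n) ℝ}
    (hA : A.PosSemidef) (hB : B.PosSemidef) : 0 ≤ (A * B).trace := by
  open scoped MatrixOrder in
  obtain ⟨C, hC⟩ := CStarAlgebra.nonneg_iff_eq_star_mul_self.mp hB.nonneg
  rw [hC, ← Matrix.mul_assoc, Matrix.trace_mul_comm, ← Matrix.mul_assoc]
  exact aux_trace_nonneg (hA.mul_mul_conjTranspose_same C)

lemma aux_trace_sq_le {n : ℕ} {A : Matrix (Fin n) (Fin n) ℝ} (hA : A.PosSemidef) :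
    (A * A).trace ≤ A.trace ^ 2 := by
  have hH := hA.isHermitian
  set U : Matrix (Fin n) (Fin n) ℝ := hH.eigenvectorUnitary.1 with hU
  have hdiag : (star U) * A * U = diagonal hH.eigenvalues := by
    simpa [Unitary.conjStarAlgAut_star_apply] using hH.conjStarAlgAut_star_eigenvectorUnitary
  have hUU : U * star U = 1 := (Matrix.mem_unitaryGroup_iff).mp hH.eigenvectorUnitary.2
  have hUU' : star U * U = 1 := (Matrix.mem_unitaryGroup_iff').mp hH.eigenvectorUnitary.2
  have hAspec : A = U * diagonal hH.eigenvalues * star U := by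
    rw [← hdiag]
    rw [Matrix.mul_assoc, Matrix.mul_assoc, Matrix.mul_assoc]
    rw [hUU]
    rw [Matrix.mul_one, ← Matrix.mul_assoc, hUU, Matrix.one_mul]
  have h1 : (A * A).trace = ∑ i, hH.eigenvalues i ^ 2 := by
    conv_lhs => rw [hAspec]
    rw [show (U * diagonal hH.eigenvalues * star U) * (U * diagonal hH.eigenvalues * star U)
      = U * (diagonal hH.eigenvalues * diagonal hH.eigenvalues) * star U by
        rw [Matrix.mul_assoc, Matrix.mul_assoc, Matrix.mul_assoc]
        rw [← Matrix.mul_assoc (star U), hUU', Matrix.one_mul, Matrix.mul_assoc]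
        rw [Matrix.mul_assoc]]
    rw [Matrix.trace_mul_cycle, ← Matrix.mul_assoc, hUU', Matrix.one_mul,
      Matrix.diagonal_mul_diagonal, Matrix.trace_diagonal]
    simp [pow_two]
  have h2 : A.trace = ∑ i, hH.eigenvalues i := by
    conv_lhs => rw [hAspec]
    rw [Matrix.trace_mul_cycle, hUU', Matrix.one_mul, Matrix.trace_diagonal]
  rw [h1, h2]
  exact Finset.sum_sq_le_sq_sum_of_nonneg fun i _ => hA.eigenvalues_nonneg i

/-- Case (ii) of the quadratic growth theorem: if `Z⋆` is PSD of rank `n - 1`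
and `X⋆` is feasible with `Z⋆X⋆ = 0`, then for every feasible `X`,
`⟨Z⋆, X⟩ ≥ (λ_{n-1}(Z⋆)/2)‖X - X⋆‖_F²`. -/
theorem stmt_12 {n : ℕ} (hn : 2 ≤ n)
    (Zs Xs : Matrix (Fin n) (Fin n) ℝ)
    (hZs : Zs.PosSemidef) (hrank : Zs.rank = n - 1)
    (hXs : Xs.PosSemidef) (hXstr : Xs.trace = 1) (hcomp : Zs * Xs = 0) :
    ∀ X : Matrix (Fin n) (Fin n) ℝ, X.PosSemidef → X.trace = 1 →
      (eigDesc hZs.isHermitian ⟨n - 2, by omega⟩ / 2) * frob (X - Xs) ^ 2 ≤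
        (Zsᵀ * X).trace := by
  intro X hX hXtr
  have hZH := hZs.isHermitian
  set μ : Fin n → ℝ := hZH.eigenvalues with hμdef
  set σ : Equiv.Perm (Fin n) := Tuple.sort μ with hσdef
  have hmono : Monotone (μ ∘ σ) := Tuple.monotone_sort μ
  -- the distinguished small eigenvalue
  set lam : ℝ := eigDesc hZH ⟨n - 2, by omega⟩ with hlamdef
  have hlam_eq : lam = μ (σ ⟨1, by omega⟩) := by
    have : (⟨n - 2, by omega⟩ : Fin n).rev = ⟨1, by omega⟩ := by
      ext; simp [Fin.rev]; omega
    rw [hlamdef, eigDesc, this]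
  have hμnonneg : ∀ i, 0 ≤ μ i := fun i => hZs.eigenvalues_nonneg i
  have hlam_nonneg : 0 ≤ lam := hlam_eq ▸ hμnonneg _
  -- the unique zero eigenvalue
  have hcard : Fintype.card {i // μ i ≠ 0} = n - 1 := by
    rw [← hZH.rank_eq_card_non_zero_eigs, hrank]
  have hcard0 : Fintype.card {i // μ i = 0} = 1 := by
    have := Fintype.card_subtype_compl (fun i => μ i ≠ 0) (α := Fin n)
    simp only [ne_eq, not_not] at this
    rw [this, hcard, Fintype.card_fin]
    omega
  obtain ⟨⟨i0, hi0⟩, hi0u⟩ := Fintype.card_eq_one_iff.mp hcard0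
  have hzero_unique : ∀ i, μ i = 0 → i = i0 := fun i hi =>
    congrArg Subtype.val (hi0u ⟨i, hi⟩)
  -- sorted: position 0 carries the zero eigenvalue
  have hg0 : μ (σ (⟨0, by omega⟩ : Fin n)) = 0 := by
    have h1 : μ (σ (⟨0, by omega⟩ : Fin n)) ≤ μ (σ (σ.symm i0)) :=
      hmono (Fin.le_def.mpr (Nat.zero_le _))
    rw [Equiv.apply_symm_apply, hi0] at h1
    exact le_antisymm h1 (hμnonneg _)
  -- every nonzero eigenvalue is at least lam
  have hkey : ∀ i, μ i ≠ 0 → lam ≤ μ i := by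
    intro i hi
    have hji : σ (σ.symm i) = i := Equiv.apply_symm_apply σ i
    have hj0 : σ.symm i ≠ (⟨0, by omega⟩ : Fin n) := by
      intro h
      rw [h] at hji
      exact hi (hji ▸ hg0)
    have h1j : (⟨1, by omega⟩ : Fin n) ≤ σ.symm i := by
      rw [Fin.le_def]
      simp only [Fin.val_mk]
      have : (σ.symm i).val ≠ 0 := fun h => hj0 (Fin.ext h)
      omega
    have := hmono h1j
    simp only [Function.comp_apply, hji] at this
    rw [hlam_eq]
    exact this
  -- unitary conjugation
  set U : Matrix (Fin n) (Fin n) ℝ := hZH.eigenvectorUnitary.1 with hUdef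
  have hdiag : (star U) * Zs * U = diagonal μ := by
    simpa [Unitary.conjStarAlgAut_star_apply] using hZH.conjStarAlgAut_star_eigenvectorUnitary
  have hUU : U * star U = 1 := (Matrix.mem_unitaryGroup_iff).mp hZH.eigenvectorUnitary.2
  have hUU' : star U * U = 1 := (Matrix.mem_unitaryGroup_iff').mp hZH.eigenvectorUnitary.2
  set Xs' : Matrix (Fin n) (Fin n) ℝ := star U * Xs * U with hXs'def
  have hXs'psd : Xs'.PosSemidef := by
    have := hXs.conjTranspose_mul_mul_same U
    rwa [← Matrix.star_eq_conjTranspose] at this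
  have hDXs' : diagonal μ * Xs' = 0 := by
    rw [← hdiag, hXs'def]
    calc star U * Zs * U * (star U * Xs * U)
        = star U * (Zs * (U * star U) * Xs) * U := by
          simp only [Matrix.mul_assoc]
      _ = 0 := by rw [hUU, Matrix.mul_one, hcomp, Matrix.mul_zero, Matrix.zero_mul]
  have hXs'zero : ∀ i j, μ i ≠ 0 → Xs' i j = 0 := by
    intro i j hi
    have := congrFun (congrFun hDXs' i) j
    rw [Matrix.diagonal_mul] at this
    simp only [Matrix.zero_apply] at this
    exact (mul_eq_zero.mp this).resolve_left hi
  have hXs'symm : ∀ i j, Xs' i j = Xs' j i := by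
    intro i j
    have := congrFun (congrFun hXs'psd.isHermitian.eq i) j
    simpa [Matrix.conjTranspose_apply] using this.symm
  have hXs'offzero : ∀ i j, (i ≠ i0 ∨ j ≠ i0) → Xs' i j = 0 := by
    rintro i j (hi | hj)
    · exact hXs'zero i j fun h => hi (hzero_unique i h)
    · rw [hXs'symm]
      exact hXs'zero j i fun h => hj (hzero_unique j h)
  have hXs'tr : Xs'.trace = 1 := by
    rw [hXs'def, Matrix.trace_mul_cycle, hUU, Matrix.one_mul, hXstr]
  have hXs'00 : Xs' i0 i0 = 1 := by
    have : Xs'.trace = Xs' i0 i0 := by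
      rw [Matrix.trace]
      exact Finset.sum_eq_single i0
        (fun i _ hi => hXs'offzero i i (Or.inl hi)) (fun h => absurd (Finset.mem_univ i0) h)
    rw [← this, hXs'tr]
  -- the PSD certificate matrix
  set M : Matrix (Fin n) (Fin n) ℝ := Zs + lam • Xs - lam • 1 with hMdef
  have e1 : star U * (lam • Xs) * U = lam • Xs' := by
    rw [Matrix.mul_smul, Matrix.smul_mul, hXs'def]
  have e2 : star U * (lam • (1 : Matrix (Fin n) (Fin n) ℝ)) * U
      = lam • (1 : Matrix (Fin n) (Fin n) ℝ) := by
    rw [Matrix.mul_smul, Matrix.smul_mul, Matrix.mul_one, hUU']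
  have hM' : star U * M * U = diagonal μ + lam • Xs' - lam • 1 := by
    rw [hMdef, Matrix.mul_sub, Matrix.sub_mul, Matrix.mul_add, Matrix.add_mul, hdiag, e1, e2]
  have hM'diag : diagonal μ + lam • Xs' - lam • 1
      = diagonal (fun i => μ i + lam * Xs' i i - lam) := by
    ext i j
    by_cases h : i = j
    · subst h
      simp [Matrix.diagonal_apply_eq, Matrix.one_apply_eq]
    · have : Xs' i j = 0 := by
        rcases eq_or_ne i i0 with rfl | hi
        · exact hXs'offzero _ _ (Or.inr (by rintro rfl; exact h rfl))
        · exact hXs'offzero _ _ (Or.inl hi)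
      simp [Matrix.diagonal_apply_ne _ h, Matrix.one_apply_ne h, this]
  have hM'psd : (diagonal μ + lam • Xs' - lam • 1).PosSemidef := by
    rw [hM'diag]
    refine Matrix.posSemidef_diagonal_iff.mpr fun i => ?_
    rcases eq_or_ne i i0 with rfl | hi
    · rw [hi0, hXs'00]
      ring_nf
      exact le_refl 0
    · have hμi : μ i ≠ 0 := fun h => hi (hzero_unique i h)
      have h1 := hkey i hμi
      have h2 : Xs' i i = 0 := hXs'offzero i i (Or.inl hi)
      rw [h2, mul_zero, add_zero]
      linarith
  have hMpsd : M.PosSemidef := by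
    have hMeq : M = U * (star U * M * U) * star U := by
      calc M = (U * star U) * M * (U * star U) := by rw [hUU, Matrix.one_mul, Matrix.mul_one]
        _ = U * (star U * M * U) * star U := by simp only [Matrix.mul_assoc]
    rw [hMeq, hM']
    have := hM'psd.mul_mul_conjTranspose_same U
    rwa [← Matrix.star_eq_conjTranspose] at this
  -- trace inequality from the certificate
  have hcert : 0 ≤ (M * X).trace := aux_trace_mul_nonneg hMpsd hX
  set t : ℝ := (Xs * X).trace with htdef
  have hexpand : (M * X).trace = (Zs * X).trace + lam * t - lam := by
    rw [hMdef, Matrix.sub_mul, Matrix.add_mul, Matrix.trace_sub, Matrix.trace_add,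
      Matrix.smul_mul, Matrix.smul_mul, Matrix.trace_smul, Matrix.trace_smul,
      Matrix.one_mul, hXtr]
    simp [htdef, smul_eq_mul]
  have hmain : lam * (1 - t) ≤ (Zs * X).trace := by
    rw [hexpand] at hcert
    linarith
  -- expanding the Frobenius norm
  have hXsymm : Xᵀ = X := by
    have := hX.isHermitian.eq
    rwa [Matrix.conjTranspose_eq_transpose_of_trivial] at this
  have hXssymm : Xsᵀ = Xs := by
    have := hXs.isHermitian.eq
    rwa [Matrix.conjTranspose_eq_transpose_of_trivial] at this
  have hfrob : frob (X - Xs) ^ 2 = (X * X).trace - 2 * t + (Xs * Xs).trace := by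
    have hpsd : ((X - Xs)ᵀ * (X - Xs)).PosSemidef := by
      have := Matrix.posSemidef_conjTranspose_mul_self (X - Xs)
      rwa [Matrix.conjTranspose_eq_transpose_of_trivial] at this
    rw [frob, Real.sq_sqrt (aux_trace_nonneg hpsd)]
    rw [Matrix.transpose_sub, hXsymm, hXssymm]
    rw [Matrix.sub_mul, Matrix.mul_sub, Matrix.mul_sub, Matrix.trace_sub, Matrix.trace_sub,
      Matrix.trace_sub]
    have : (X * Xs).trace = t := Matrix.trace_mul_comm X Xs
    rw [this, htdef]
    ring
  have hXX : (X * X).trace ≤ 1 := by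
    have := aux_trace_sq_le hX
    rwa [hXtr, one_pow] at this
  have hXsXs : (Xs * Xs).trace ≤ 1 := by
    have := aux_trace_sq_le hXs
    rwa [hXstr, one_pow] at this
  -- conclusion
  have hZt : Zsᵀ = Zs := by
    have := hZH.eq
    rwa [Matrix.conjTranspose_eq_transpose_of_trivial] at this
  rw [hZt]
  calc lam / 2 * frob (X - Xs) ^ 2
      = lam / 2 * ((X * X).trace - 2 * t + (Xs * Xs).trace) := by rw [hfrob]
    _ ≤ lam / 2 * (2 - 2 * t) := by
        apply mul_le_mul_of_nonneg_left _ (by linarith)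
        linarith
    _ = lam * (1 - t) := by ring
    _ ≤ (Zs * X).trace := hmain
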